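/- For every word v over A and every integer n ≥ |v|: Σ_{u ∈ A^n} binom_q(u,v) = (#A)^{n−|v|}·gauss(n, |v|), where the sum ranges over all words u of length n over A and #A denotes the cardinality of the alphabet A (the factor (#A)^{n−|v|} is a constant polynomial). -/

import Mathlib

noncomputable def qbinAux {A : Type*} [DecidableEq A] : List A → List A → Polynomial ℕ
  | _, [] => 1
  | [], _ :: _ => 0
  | a :: u, b :: v =>
      Polynomial.X ^ (v.length + 1) * qbinAux u (b :: v) +
        (if a = b then qbinAux u v else 0)

/-- The `q`-binomial coefficient `binom_q(u,v)` of two words. -/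
noncomputable def qbin {A : Type*} [DecidableEq A] (u v : List A) : Polynomial ℕ :=
  qbinAux u.reverse v.reverse

/-- The Gaussian binomial coefficient `gauss(m,n) ∈ ℕ[q]`. -/
noncomputable def gauss : ℕ → ℕ → Polynomial ℕ
  | _, 0 => 1
  | 0, _ + 1 => 0
  | m + 1, n + 1 => Polynomial.X ^ (n + 1) * gauss m (n + 1) + gauss m n

/-!
Summing the defining recursion of `binom_q(ua, v)` over the last letter `a` of `u` shows that
`S(n, v) := Σ_{u ∈ A^n} binom_q(u, v)` satisfies `S(n+1, vb) = #A · q^{|vb|} · S(n, vb) + S(n, v)`: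
the letter `a` is free in the first summand and forced to equal `b` in the second. With the
substitution `S(n, v) = (#A)^{n-|v|} · T(n, |v|)` this is the recursion of `gauss` (the boundary
case `n < |v|` being harmless because both sides vanish), so `T = gauss`.
-/

open Finset Polynomial

@[simp]
lemma qbinAux_nil_right {A : Type*} [DecidableEq A] (u : List A) : qbinAux u [] = 1 := by
  cases u <;> rfl

@[simp]
lemma qbinAux_nil_cons {A : Type*} [DecidableEq A] (b : A) (t : List A) :
    qbinAux [] (b :: t) = 0 := rfl

lemma qbinAux_cons_cons {A : Type*} [DecidableEq A] (a b : A) (u v : List A) :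
    qbinAux (a :: u) (b :: v) =
      X ^ (v.length + 1) * qbinAux u (b :: v) + if a = b then qbinAux u v else 0 := rfl

lemma gauss_succ_succ (m n : ℕ) :
    gauss (m + 1) (n + 1) = X ^ (n + 1) * gauss m (n + 1) + gauss m n := rfl

lemma gauss_eq_zero_of_lt : ∀ {m n : ℕ}, m < n → gauss m n = 0
  | 0, _ + 1, _ => rfl
  | m + 1, n + 1, h => by
      rw [gauss_succ_succ, gauss_eq_zero_of_lt (by omega), gauss_eq_zero_of_lt (by omega)]
      ring

lemma mul_pow_sub_succ_mul_gauss (c : ℕ[X]) (m n : ℕ) :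
    c * (c ^ (m - (n + 1)) * gauss m (n + 1)) = c ^ (m - n) * gauss m (n + 1) := by
  rcases lt_or_ge m (n + 1) with hlt | hle
  · simp [gauss_eq_zero_of_lt hlt]
  · rw [← mul_assoc, ← pow_succ', show m - (n + 1) + 1 = m - n by omega]

lemma sum_ofFn_succ_reverse {A M : Type*} [Fintype A] [AddCommMonoid M] (n : ℕ)
    (f : List A → M) :
    ∑ u : Fin (n + 1) → A, f (List.ofFn u).reverse =
      ∑ a : A, ∑ w : Fin n → A, f (a :: (List.ofFn w).reverse) := by
  rw [← (Fin.snocEquiv fun _ => A).sum_comp, Fintype.sum_prod_type]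
  simp only [Fin.snocEquiv_apply, List.ofFn_succ', Fin.snoc_castSucc, Fin.snoc_last,
    List.concat_eq_append, List.reverse_concat]

section

variable {A : Type*} [Fintype A] [DecidableEq A]

lemma sum_qbinAux_ofFn_reverse_succ_cons (n : ℕ) (b : A) (t : List A) :
    ∑ u : Fin (n + 1) → A, qbinAux (List.ofFn u).reverse (b :: t) =
      (Fintype.card A : ℕ[X]) * (X ^ (t.length + 1) *
        ∑ w : Fin n → A, qbinAux (List.ofFn w).reverse (b :: t)) +
      ∑ w : Fin n → A, qbinAux (List.ofFn w).reverse t := by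
  rw [sum_ofFn_succ_reverse n (qbinAux · (b :: t))]
  simp only [qbinAux_cons_cons, sum_add_distrib, ← mul_sum, sum_ite_irrel, sum_const_zero]
  rw [sum_ite_eq' univ b, if_pos (mem_univ b), sum_const, card_univ, nsmul_eq_mul, mul_left_comm]

lemma sum_qbinAux_ofFn_reverse (n : ℕ) (r : List A) :
    ∑ u : Fin n → A, qbinAux (List.ofFn u).reverse r =
      (Fintype.card A : ℕ[X]) ^ (n - r.length) * gauss n r.length := by
  induction n generalizing r with
  | zero =>
    cases r with
    | nil => simp [gauss]
    | cons b t => simp [gauss_eq_zero_of_lt]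
  | succ n ih =>
    cases r with
    | nil => simp [gauss]
    | cons b t =>
      rw [sum_qbinAux_ofFn_reverse_succ_cons, ih, ih, List.length_cons, gauss_succ_succ,
        mul_left_comm, mul_pow_sub_succ_mul_gauss, Nat.add_sub_add_right]
      ring

end

theorem qbin_sum_over_superwords_general (A : Type*) [Fintype A] [DecidableEq A]
    (v : List A) (n : ℕ) :
    ∑ u : Fin n → A, qbin (List.ofFn u) v =
      (Fintype.card A : Polynomial ℕ) ^ (n - v.length) * gauss n v.length := by
  simpa only [qbin, List.length_reverse] using sum_qbinAux_ofFn_reverse n v.reverse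

/-- `Σ_{u ∈ A^n} binom_q(u,v) = (#A)^{n-|v|}·gauss(n,|v|)` for `n ≥ |v|`,
words of length `n` being parametrized by functions `Fin n → A`. -/
theorem qbin_sum_over_superwords (A : Type*) [Fintype A] [DecidableEq A]
    (v : List A) (n : ℕ) (h : v.length ≤ n) :
    ∑ u : Fin n → A, qbin (List.ofFn u) v =
      (Fintype.card A : Polynomial ℕ) ^ (n - v.length) * gauss n v.length :=
  qbin_sum_over_superwords_general A v n
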